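/- arXiv:0902.3490 — 2 statements merged into one kernel-verified Lean document; each statement's English description precedes it below -/
import Mathlib

section
/- Conversely to the diagonalization of the chiral Maxwell system: if φ, ψ : Ω → ℂ³ are C¹ purely vectorial fields satisfying (D + α₁)φ = 0 and (D - α₂)ψ = 0 with α₁ = α/(1+αβ), α₂ = α/(1-αβ), then E = (φ + ψ)/2 and H = (φ - ψ)/(2i) satisfy rot E = -iα(H + β rot H), rot H = iα(E + β rot E), and div E = div H = 0. -/
noncomputable section

/-- ℝ³ -/
abbrev V3 := Fin 3 → ℝ
/-- Complex quaternions ℍ(ℂ) -/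
abbrev HC := Quaternion ℂ

/-- partial derivative ∂ₖ of a function on ℝ³ -/
noncomputable def pd {E : Type*} [NormedAddCommGroup E] [NormedSpace ℝ E]
    (k : Fin 3) (g : V3 → E) (x : V3) : E :=
  fderiv ℝ g x (Pi.single k 1)

noncomputable def grad {E : Type*} [NormedAddCommGroup E] [NormedSpace ℝ E]
    (g : V3 → E) (x : V3) : Fin 3 → E := fun k => pd k g x

noncomputable def dvg {E : Type*} [NormedAddCommGroup E] [NormedSpace ℝ E]
    (F : V3 → Fin 3 → E) (x : V3) : E :=
  pd 0 (fun y => F y 0) x + pd 1 (fun y => F y 1) x + pd 2 (fun y => F y 2) x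

noncomputable def rot {E : Type*} [NormedAddCommGroup E] [NormedSpace ℝ E]
    (F : V3 → Fin 3 → E) (x : V3) : Fin 3 → E :=
  ![pd 1 (fun y => F y 2) x - pd 2 (fun y => F y 1) x,
    pd 2 (fun y => F y 0) x - pd 0 (fun y => F y 2) x,
    pd 0 (fun y => F y 1) x - pd 1 (fun y => F y 0) x]

/-- scalar Laplacian -/
noncomputable def lapS {E : Type*} [NormedAddCommGroup E] [NormedSpace ℝ E]
    (g : V3 → E) (x : V3) : E :=
  pd 0 (pd 0 g) x + pd 1 (pd 1 g) x + pd 2 (pd 2 g) x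

/-- purely vectorial quaternion from a ℂ³ vector -/
def vecq (v : Fin 3 → ℂ) : HC := ⟨0, v 0, v 1, v 2⟩
/-- scalar quaternion -/
def scq (a : ℂ) : HC := ⟨a, 0, 0, 0⟩

def e1 : HC := ⟨0,1,0,0⟩
def e2 : HC := ⟨0,0,1,0⟩
def e3 : HC := ⟨0,0,0,1⟩

/-- vector part of a quaternion, as a ℂ³ vector -/
def vecPart (a : HC) : Fin 3 → ℂ := ![a.imI, a.imJ, a.imK]

/-- quaternionic conjugation C_H -/
def qconj (a : HC) : HC := ⟨a.re, -a.imI, -a.imJ, -a.imK⟩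

/-- componentwise partial derivative of an ℍ(ℂ)-valued function -/
noncomputable def qpd (k : Fin 3) (F : V3 → HC) (x : V3) : HC :=
  ⟨pd k (fun y => (F y).re) x, pd k (fun y => (F y).imI) x,
   pd k (fun y => (F y).imJ) x, pd k (fun y => (F y).imK) x⟩

/-- The Moisil–Teodorescu (Dirac) operator D = Σₖ iₖ∂ₖ -/
noncomputable def Dq (F : V3 → HC) (x : V3) : HC :=
  e1 * qpd 0 F x + e2 * qpd 1 F x + e3 * qpd 2 F x

/-- componentwise Laplacian of an ℍ(ℂ)-valued function -/
noncomputable def qlap (F : V3 → HC) (x : V3) : HC :=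
  qpd 0 (qpd 0 F) x + qpd 1 (qpd 1 F) x + qpd 2 (qpd 2 F) x

/-- ContDiffOn for ℍ(ℂ)-valued functions, componentwise -/
def QContDiffOn (n : ℕ∞) (F : V3 → HC) (s : Set V3) : Prop :=
  ContDiffOn ℝ n (fun x => (F x).re) s ∧ ContDiffOn ℝ n (fun x => (F x).imI) s ∧
  ContDiffOn ℝ n (fun x => (F x).imJ) s ∧ ContDiffOn ℝ n (fun x => (F x).imK) s

/-- euclidean norm on ℝ³ -/
noncomputable def nrm (x : V3) : ℝ := Real.sqrt (x 0 ^ 2 + x 1 ^ 2 + x 2 ^ 2)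

/-- fundamental solution of the Helmholtz operator -/
noncomputable def theta (α : ℂ) (x : V3) : ℂ :=
  -Complex.exp (Complex.I * α * (nrm x : ℂ)) / (4 * Real.pi * (nrm x : ℂ))

/-- x as a purely vectorial quaternion -/
def xq (x : V3) : HC := vecq fun k => ((x k : ℝ) : ℂ)


/-- componentwise smoothness of ℂ³-valued fields -/
def VContDiffOn (n : ℕ∞) (F : V3 → Fin 3 → ℂ) (s : Set V3) : Prop :=
  ∀ k, ContDiffOn ℝ n (fun x => F x k) s


/-!
For a purely vectorial field, `D (vecq F) = -div F + rot F`, so the two quaternionic equations say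
exactly `div φ = div ψ = 0`, `rot φ = -α₁ φ` and `rot ψ = α₂ ψ`. By linearity of `rot` and `div`
the claims about `E` and `H` then reduce, componentwise, to the identities
`1 - β α₁ = 1 / (1 + αβ)` and `1 + β α₂ = 1 / (1 - αβ)`.
-/

section Linearity

variable {E : Type*} [NormedAddCommGroup E] [NormedSpace ℝ E]
variable {𝕜 : Type*} [NormedField 𝕜] [NormedAlgebra ℝ 𝕜]

lemma pd_add {f g : V3 → E} {x : V3} (hf : DifferentiableAt ℝ f x)
    (hg : DifferentiableAt ℝ g x) (k : Fin 3) :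
    pd k (fun y => f y + g y) x = pd k f x + pd k g x := by
  simp only [pd, fderiv_fun_add hf hg, add_apply]

lemma pd_sub {f g : V3 → E} {x : V3} (hf : DifferentiableAt ℝ f x)
    (hg : DifferentiableAt ℝ g x) (k : Fin 3) :
    pd k (fun y => f y - g y) x = pd k f x - pd k g x := by
  simp only [pd, fderiv_fun_sub hf hg, sub_apply]

lemma pd_div_const (f : V3 → 𝕜) (c : 𝕜) (x : V3) (k : Fin 3) :
    pd k (fun y => f y / c) x = pd k f x / c := by
  have hf : (fun y => f y / c) = c⁻¹ • f := by
    funext y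
    simp [div_eq_inv_mul]
  rw [pd, hf, fderiv_const_smul_field, pd]
  simp [div_eq_inv_mul]

variable {F G : V3 → Fin 3 → E} {x : V3}

lemma rot_add (hF : ∀ j, DifferentiableAt ℝ (fun y => F y j) x)
    (hG : ∀ j, DifferentiableAt ℝ (fun y => G y j) x) :
    rot (fun y k => F y k + G y k) x = rot F x + rot G x := by
  simp only [rot, pd_add (hF _) (hG _), Matrix.cons_add_cons, Matrix.empty_add_empty,
    add_sub_add_comm]

lemma rot_sub (hF : ∀ j, DifferentiableAt ℝ (fun y => F y j) x)
    (hG : ∀ j, DifferentiableAt ℝ (fun y => G y j) x) :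
    rot (fun y k => F y k - G y k) x = rot F x - rot G x := by
  simp only [rot, pd_sub (hF _) (hG _), Matrix.cons_sub_cons, Matrix.empty_sub_empty,
    sub_sub_sub_comm]

lemma dvg_add (hF : ∀ j, DifferentiableAt ℝ (fun y => F y j) x)
    (hG : ∀ j, DifferentiableAt ℝ (fun y => G y j) x) :
    dvg (fun y k => F y k + G y k) x = dvg F x + dvg G x := by
  simp only [dvg, pd_add (hF _) (hG _)]
  abel

lemma dvg_sub (hF : ∀ j, DifferentiableAt ℝ (fun y => F y j) x)
    (hG : ∀ j, DifferentiableAt ℝ (fun y => G y j) x) :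
    dvg (fun y k => F y k - G y k) x = dvg F x - dvg G x := by
  simp only [dvg, pd_sub (hF _) (hG _)]
  abel

lemma rot_div_const (F : V3 → Fin 3 → 𝕜) (c : 𝕜) (x : V3) :
    rot (fun y k => F y k / c) x = fun k => rot F x k / c := by
  funext k
  fin_cases k <;> simp [rot, pd_div_const, sub_div]

lemma dvg_div_const (F : V3 → Fin 3 → 𝕜) (c : 𝕜) (x : V3) :
    dvg (fun y k => F y k / c) x = dvg F x / c := by
  simp only [dvg, pd_div_const, add_div]

end Linearity

lemma Dq_vecq (F : V3 → Fin 3 → ℂ) (x : V3) :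
    Dq (fun y => vecq (F y)) x = ⟨-dvg F x, rot F x 0, rot F x 1, rot F x 2⟩ := by
  have hpd0 : ∀ k, pd k (fun _ : V3 => (0 : ℂ)) x = 0 := fun k => by simp [pd]
  ext <;>
    simp only [Dq, Quaternion.re_add, Quaternion.imI_add, Quaternion.imJ_add, Quaternion.imK_add,
      Quaternion.re_mul, Quaternion.imI_mul, Quaternion.imJ_mul, Quaternion.imK_mul] <;>
    simp only [qpd, e1, e2, e3, vecq, hpd0, dvg, rot, Fin.isValue, Matrix.cons_val_zero,
      Matrix.cons_val_one, Matrix.cons_val, mul_zero, zero_mul, one_mul] <;> ring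

lemma Dq_vecq_add_smul_eq_zero_iff (F : V3 → Fin 3 → ℂ) (c : ℂ) (x : V3) :
    Dq (fun y => vecq (F y)) x + c • vecq (F x) = 0 ↔ dvg F x = 0 ∧ rot F x = -c • F x := by
  rw [Quaternion.ext_iff]
  simp only [Quaternion.re_add, Quaternion.imI_add, Quaternion.imJ_add, Quaternion.imK_add,
    Quaternion.re_smul, Quaternion.imI_smul, Quaternion.imJ_smul, Quaternion.imK_smul,
    Quaternion.re_zero, Quaternion.imI_zero, Quaternion.imJ_zero, Quaternion.imK_zero]
  rw [Dq_vecq]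
  simp [vecq, funext_iff, Fin.forall_fin_succ, add_eq_zero_iff_eq_neg]

lemma VContDiffOn.differentiableAt {n : ℕ∞} {F : V3 → Fin 3 → ℂ} {Ω : Set V3}
    (hF : VContDiffOn n F Ω) (hn : n ≠ 0) (hΩ : IsOpen Ω) {x : V3} (hx : x ∈ Ω) (j : Fin 3) :
    DifferentiableAt ℝ (fun y => F y j) x :=
  ((hF j).contDiffAt (hΩ.mem_nhds hx)).differentiableAt (by exact_mod_cast hn)

/-- converse to the diagonalization of the chiral Maxwell system. -/
theorem stmt5 (α β : ℂ) (h1 : 1 + α * β ≠ 0) (h2 : 1 - α * β ≠ 0)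
    (Ω : Set V3) (hΩ : IsOpen Ω) (φ ψ : V3 → Fin 3 → ℂ)
    (hφ : VContDiffOn 1 φ Ω) (hψ : VContDiffOn 1 ψ Ω)
    (hφe : ∀ x ∈ Ω, Dq (fun y => vecq (φ y)) x
        + (α / (1 + α * β)) • vecq (φ x) = 0)
    (hψe : ∀ x ∈ Ω, Dq (fun y => vecq (ψ y)) x
        - (α / (1 - α * β)) • vecq (ψ x) = 0) :
    ∀ x ∈ Ω,
      (rot (fun y k => (φ y k + ψ y k) / 2) x
        = fun k => -Complex.I * α *
            ((φ x k - ψ x k) / (2 * Complex.I)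
              + β * rot (fun y k' => (φ y k' - ψ y k') / (2 * Complex.I)) x k) ) ∧
      (rot (fun y k => (φ y k - ψ y k) / (2 * Complex.I)) x
        = fun k => Complex.I * α *
            ((φ x k + ψ x k) / 2
              + β * rot (fun y k' => (φ y k' + ψ y k') / 2) x k) ) ∧
      dvg (fun y k => (φ y k + ψ y k) / 2) x = 0 ∧
      dvg (fun y k => (φ y k - ψ y k) / (2 * Complex.I)) x = 0 := by
  intro x hx
  have hφx := hφ.differentiableAt one_ne_zero hΩ hx
  have hψx := hψ.differentiableAt one_ne_zero hΩ hx
  obtain ⟨hdivφ, hrotφ⟩ := (Dq_vecq_add_smul_eq_zero_iff φ _ x).1 (hφe x hx)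
  obtain ⟨hdivψ, hrotψ⟩ := (Dq_vecq_add_smul_eq_zero_iff ψ (-(α / (1 - α * β))) x).1 <| by
    rw [← hψe x hx]
    module
  rw [rot_div_const (fun y k => φ y k + ψ y k), rot_div_const (fun y k => φ y k - ψ y k),
    dvg_div_const (fun y k => φ y k + ψ y k), dvg_div_const (fun y k => φ y k - ψ y k),
    rot_add hφx hψx, rot_sub hφx hψx, dvg_add hφx hψx, dvg_sub hφx hψx,
    hrotφ, hrotψ, hdivφ, hdivψ]
  refine ⟨funext fun k => ?_, funext fun k => ?_, by simp, by simp⟩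
  all_goals simp only [Pi.add_apply, Pi.sub_apply, Pi.smul_apply, smul_eq_mul]; field_simp
  · ring
  · linear_combination
      -(α * φ x k + α * ψ x k - α ^ 2 * β * φ x k + α ^ 2 * β * ψ x k) * Complex.I_sq
end
end

section
/- Let f : Ω → ℂ be nonvanishing C¹. The four functions F₀ = f, F₁ = i₁/f, F₂ = i₂/f, F₃ = i₃/f are solutions of the main quaternionic Vekua equation (D - (Df/f)C_H)W = 0, and a function W = Σⱼ₌₀³ φⱼFⱼ with scalar C¹ coefficients φⱼ solves the Vekua equation if and only if Σⱼ₌₀³ (Dφⱼ)Fⱼ = 0. -/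
/-! Scalars commute with every quaternion and are fixed by `C_H`, so `D` obeys the Leibniz rule
`D(φW) = (Dφ)W + φ DW` for scalar `φ`, and `W ↦ (Df/f) C_H W` is linear over scalar functions.
Hence `D(Σ φⱼFⱼ) - (Df/f) C_H(Σ φⱼFⱼ) = Σ (Dφⱼ)Fⱼ` as soon as every `Fⱼ` solves the equation.
They do: `Df = (Df/f) f`, and `D(iₖ/f) = grad(1/f) iₖ = -(Df/f)(iₖ/f) = (Df/f) C_H(iₖ/f)`, because
`C_H` negates the vector `iₖ`. -/

noncomputable section

/-- The generating quartet F₀ = f, Fₖ = iₖ/f. -/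
noncomputable def Ffun (f : V3 → ℂ) : Fin 4 → V3 → HC :=
  ![fun y => scq (f y), fun y => e1 * scq (f y)⁻¹,
    fun y => e2 * scq (f y)⁻¹, fun y => e3 * scq (f y)⁻¹]

lemma scq_mul_eq_smul (a : ℂ) (q : HC) : scq a * q = a • q :=
  Quaternion.coe_mul_eq_smul a q

lemma scq_commute (a : ℂ) (q : HC) : Commute (scq a) q :=
  Quaternion.coe_commutes a q

lemma mul_scq_mul_comm (q : HC) (a : ℂ) (p : HC) : q * (scq a * p) = scq a * (q * p) :=
  (scq_commute a q).symm.left_comm p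

@[simp] lemma scq_re (a : ℂ) : (scq a).re = a := rfl
@[simp] lemma scq_imI (a : ℂ) : (scq a).imI = 0 := rfl
@[simp] lemma scq_imJ (a : ℂ) : (scq a).imJ = 0 := rfl
@[simp] lemma scq_imK (a : ℂ) : (scq a).imK = 0 := rfl

@[simp] lemma scq_mul_re (a : ℂ) (q : HC) : (scq a * q).re = a * q.re := by
  rw [scq_mul_eq_smul]; rfl
@[simp] lemma scq_mul_imI (a : ℂ) (q : HC) : (scq a * q).imI = a * q.imI := by
  rw [scq_mul_eq_smul]; rfl
@[simp] lemma scq_mul_imJ (a : ℂ) (q : HC) : (scq a * q).imJ = a * q.imJ := by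
  rw [scq_mul_eq_smul]; rfl
@[simp] lemma scq_mul_imK (a : ℂ) (q : HC) : (scq a * q).imK = a * q.imK := by
  rw [scq_mul_eq_smul]; rfl

@[simp] lemma qconj_re (q : HC) : (qconj q).re = q.re := rfl
@[simp] lemma qconj_imI (q : HC) : (qconj q).imI = -q.imI := rfl
@[simp] lemma qconj_imJ (q : HC) : (qconj q).imJ = -q.imJ := rfl
@[simp] lemma qconj_imK (q : HC) : (qconj q).imK = -q.imK := rfl

lemma qconj_scq (a : ℂ) : qconj (scq a) = scq a := by
  ext <;> simp

lemma qconj_eq_neg_of_re_eq_zero {q : HC} (hq : q.re = 0) : qconj q = -q := by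
  ext <;> simp [hq]

lemma qconj_scq_mul (a : ℂ) (q : HC) : qconj (scq a * q) = scq a * qconj q := by
  ext <;> simp

@[simp] lemma vecq_re (v : Fin 3 → ℂ) : (vecq v).re = 0 := rfl
@[simp] lemma vecq_imI (v : Fin 3 → ℂ) : (vecq v).imI = v 0 := rfl
@[simp] lemma vecq_imJ (v : Fin 3 → ℂ) : (vecq v).imJ = v 1 := rfl
@[simp] lemma vecq_imK (v : Fin 3 → ℂ) : (vecq v).imK = v 2 := rfl

lemma vecq_eq (v : Fin 3 → ℂ) : vecq v = scq (v 0) * e1 + scq (v 1) * e2 + scq (v 2) * e3 := by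
  ext <;> simp <;> simp [e1, e2, e3]

lemma neg_vecq (v : Fin 3 → ℂ) : -vecq v = vecq (-v) := by
  ext <;> simp

lemma scq_mul_vecq (a : ℂ) (v : Fin 3 → ℂ) : scq a * vecq v = vecq (fun k => a * v k) := by
  ext <;> simp

lemma re_sum {ι : Type*} (s : Finset ι) (q : ι → HC) :
    (∑ i ∈ s, q i).re = ∑ i ∈ s, (q i).re :=
  map_sum (QuaternionAlgebra.reₗ _ _ _) q s

lemma imI_sum {ι : Type*} (s : Finset ι) (q : ι → HC) :
    (∑ i ∈ s, q i).imI = ∑ i ∈ s, (q i).imI :=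
  map_sum (QuaternionAlgebra.imIₗ _ _ _) q s

lemma imJ_sum {ι : Type*} (s : Finset ι) (q : ι → HC) :
    (∑ i ∈ s, q i).imJ = ∑ i ∈ s, (q i).imJ :=
  map_sum (QuaternionAlgebra.imJₗ _ _ _) q s

lemma imK_sum {ι : Type*} (s : Finset ι) (q : ι → HC) :
    (∑ i ∈ s, q i).imK = ∑ i ∈ s, (q i).imK :=
  map_sum (QuaternionAlgebra.imKₗ _ _ _) q s

lemma qconj_sum {ι : Type*} (s : Finset ι) (q : ι → HC) :
    qconj (∑ i ∈ s, q i) = ∑ i ∈ s, qconj (q i) := by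
  ext <;> simp [re_sum, imI_sum, imJ_sum, imK_sum]

lemma pd_inv {g : V3 → ℂ} {x : V3} (hg : DifferentiableAt ℝ g x) (h0 : g x ≠ 0) (k : Fin 3) :
    pd k (fun y => (g y)⁻¹) x = -(pd k g x / g x ^ 2) := by
  have h := ((hasFDerivAt_inv' (𝕜 := ℝ) h0).comp x hg.hasFDerivAt).fderiv
  rw [pd, show (fun y => (g y)⁻¹) = Inv.inv ∘ g from rfl, h]
  simp only [ContinuousLinearMap.neg_comp, neg_apply,
    ContinuousLinearMap.comp_apply, ContinuousLinearMap.mulLeftRight_apply, pd, neg_inj]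
  field_simp

@[simp] lemma qpd_re (k : Fin 3) (F : V3 → HC) (x : V3) :
    (qpd k F x).re = pd k (fun y => (F y).re) x := rfl
@[simp] lemma qpd_imI (k : Fin 3) (F : V3 → HC) (x : V3) :
    (qpd k F x).imI = pd k (fun y => (F y).imI) x := rfl
@[simp] lemma qpd_imJ (k : Fin 3) (F : V3 → HC) (x : V3) :
    (qpd k F x).imJ = pd k (fun y => (F y).imJ) x := rfl
@[simp] lemma qpd_imK (k : Fin 3) (F : V3 → HC) (x : V3) :
    (qpd k F x).imK = pd k (fun y => (F y).imK) x := rfl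

def QDifferentiableAt (F : V3 → HC) (x : V3) : Prop :=
  DifferentiableAt ℝ (fun y => (F y).re) x ∧ DifferentiableAt ℝ (fun y => (F y).imI) x ∧
  DifferentiableAt ℝ (fun y => (F y).imJ) x ∧ DifferentiableAt ℝ (fun y => (F y).imK) x

lemma qDifferentiableAt_const (c : HC) (x : V3) : QDifferentiableAt (fun _ => c) x :=
  ⟨differentiableAt_const _, differentiableAt_const _, differentiableAt_const _,
    differentiableAt_const _⟩

lemma QDifferentiableAt.scq_mul {φ : V3 → ℂ} {F : V3 → HC} {x : V3}
    (hφ : DifferentiableAt ℝ φ x) (hF : QDifferentiableAt F x) :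
    QDifferentiableAt (fun y => scq (φ y) * F y) x := by
  obtain ⟨h₁, h₂, h₃, h₄⟩ := hF
  simp only [QDifferentiableAt, scq_mul_re, scq_mul_imI, scq_mul_imJ, scq_mul_imK]
  exact ⟨hφ.mul h₁, hφ.mul h₂, hφ.mul h₃, hφ.mul h₄⟩

lemma QDifferentiableAt.mul_scq {φ : V3 → ℂ} {F : V3 → HC} {x : V3}
    (hF : QDifferentiableAt F x) (hφ : DifferentiableAt ℝ φ x) :
    QDifferentiableAt (fun y => F y * scq (φ y)) x := by
  simpa only [(scq_commute _ _).eq] using hF.scq_mul hφ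

lemma qpd_const (k : Fin 3) (c : HC) (x : V3) : qpd k (fun _ => c) x = 0 := by
  ext <;> simp [pd, Quaternion.re_zero, Quaternion.imI_zero, Quaternion.imJ_zero,
    Quaternion.imK_zero]

lemma qpd_sum {ι : Type*} (s : Finset ι) {F : ι → V3 → HC} {x : V3}
    (hF : ∀ i ∈ s, QDifferentiableAt (F i) x) (k : Fin 3) :
    qpd k (fun y => ∑ i ∈ s, F i y) x = ∑ i ∈ s, qpd k (F i) x := by
  ext <;> simp only [qpd_re, qpd_imI, qpd_imJ, qpd_imK, re_sum, imI_sum, imJ_sum, imK_sum, pd]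
  · rw [fderiv_fun_sum fun i hi => (hF i hi).1]; simp
  · rw [fderiv_fun_sum fun i hi => (hF i hi).2.1]; simp
  · rw [fderiv_fun_sum fun i hi => (hF i hi).2.2.1]; simp
  · rw [fderiv_fun_sum fun i hi => (hF i hi).2.2.2]; simp

lemma qpd_scq_mul {φ : V3 → ℂ} {F : V3 → HC} {x : V3}
    (hφ : DifferentiableAt ℝ φ x) (hF : QDifferentiableAt F x) (k : Fin 3) :
    qpd k (fun y => scq (φ y) * F y) x = scq (pd k φ x) * F x + scq (φ x) * qpd k F x := by
  obtain ⟨h₁, h₂, h₃, h₄⟩ := hF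
  ext <;> simp [pd, fderiv_fun_mul hφ h₁, fderiv_fun_mul hφ h₂, fderiv_fun_mul hφ h₃,
    fderiv_fun_mul hφ h₄] <;> ring

lemma Dq_sum {ι : Type*} (s : Finset ι) {F : ι → V3 → HC} {x : V3}
    (hF : ∀ i ∈ s, QDifferentiableAt (F i) x) :
    Dq (fun y => ∑ i ∈ s, F i y) x = ∑ i ∈ s, Dq (F i) x := by
  simp only [Dq, qpd_sum s hF, Finset.mul_sum, ← Finset.sum_add_distrib]

lemma Dq_const (c : HC) (x : V3) : Dq (fun _ => c) x = 0 := by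
  simp [Dq, qpd_const]

lemma Dq_scq_mul {φ : V3 → ℂ} {F : V3 → HC} {x : V3}
    (hφ : DifferentiableAt ℝ φ x) (hF : QDifferentiableAt F x) :
    Dq (fun y => scq (φ y) * F y) x = vecq (grad φ x) * F x + scq (φ x) * Dq F x := by
  simp only [Dq, qpd_scq_mul hφ hF]
  simp only [vecq_eq, grad, mul_add, add_mul, mul_assoc, mul_scq_mul_comm]
  abel

lemma Dq_scq_mul_const {g : V3 → ℂ} {x : V3} (hg : DifferentiableAt ℝ g x) (c : HC) :
    Dq (fun y => scq (g y) * c) x = vecq (grad g x) * c := by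
  rw [Dq_scq_mul hg (qDifferentiableAt_const c x), Dq_const, mul_zero, add_zero]

lemma Dq_scq_eq_vekua {f : V3 → ℂ} {x : V3} (hf : DifferentiableAt ℝ f x) (h0 : f x ≠ 0) :
    Dq (fun y => scq (f y)) x = vecq (fun k => grad f x k / f x) * qconj (scq (f x)) := by
  have hD := Dq_scq_mul_const hf 1
  simp only [mul_one] at hD
  rw [hD, qconj_scq, ← (scq_commute _ _).eq, scq_mul_vecq]
  congr 1
  funext k
  field_simp

lemma Dq_mul_scq_inv_eq_vekua {f : V3 → ℂ} {x : V3} (hf : DifferentiableAt ℝ f x)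
    (h0 : f x ≠ 0) {c : HC} (hc : c.re = 0) :
    Dq (fun y => c * scq (f y)⁻¹) x
      = vecq (fun k => grad f x k / f x) * qconj (c * scq (f x)⁻¹) := by
  simp only [← (scq_commute _ c).eq]
  -- `mul_neg _ c` with explicit `c`: the bare lemma does not match the `Neg` instance on `HC` here
  rw [Dq_scq_mul_const (hf.fun_inv h0), qconj_scq_mul, qconj_eq_neg_of_re_eq_zero hc,
    mul_neg _ c, mul_neg, ← mul_assoc, ← (scq_commute _ _).eq, scq_mul_vecq, neg_mul_eq_neg_mul,
    neg_vecq]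
  congr 2
  funext k
  simp only [grad, pd_inv hf h0, Pi.neg_apply]
  field_simp

lemma Dq_sum_scq_mul_of_vekua {ι : Type*} (s : Finset ι) {φ : ι → V3 → ℂ}
    {F : ι → V3 → HC} {x : V3} {A : HC} (hφ : ∀ i ∈ s, DifferentiableAt ℝ (φ i) x)
    (hF : ∀ i ∈ s, QDifferentiableAt (F i) x)
    (hvek : ∀ i ∈ s, Dq (F i) x = A * qconj (F i x)) :
    Dq (fun y => ∑ i ∈ s, scq (φ i y) * F i y) x
      = ∑ i ∈ s, vecq (grad (φ i) x) * F i x + A * qconj (∑ i ∈ s, scq (φ i x) * F i x) := by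
  rw [Dq_sum s fun i hi => (hF i hi).scq_mul (hφ i hi), qconj_sum, Finset.mul_sum,
    ← Finset.sum_add_distrib]
  refine Finset.sum_congr rfl fun i hi => ?_
  rw [Dq_scq_mul (hφ i hi) (hF i hi), hvek i hi, qconj_scq_mul, mul_scq_mul_comm]

lemma qDifferentiableAt_Ffun {f : V3 → ℂ} {x : V3} (hf : DifferentiableAt ℝ f x)
    (h0 : f x ≠ 0) (j : Fin 4) : QDifferentiableAt (Ffun f j) x := by
  have hinv := hf.fun_inv h0
  fin_cases j
  · exact ⟨hf, differentiableAt_const _, differentiableAt_const _, differentiableAt_const _⟩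
  · exact (qDifferentiableAt_const e1 x).mul_scq hinv
  · exact (qDifferentiableAt_const e2 x).mul_scq hinv
  · exact (qDifferentiableAt_const e3 x).mul_scq hinv

lemma Dq_Ffun_eq_vekua {f : V3 → ℂ} {x : V3} (hf : DifferentiableAt ℝ f x) (h0 : f x ≠ 0)
    (j : Fin 4) :
    Dq (Ffun f j) x = vecq (fun k => grad f x k / f x) * qconj (Ffun f j x) := by
  fin_cases j
  · exact Dq_scq_eq_vekua hf h0
  · exact Dq_mul_scq_inv_eq_vekua hf h0 rfl
  · exact Dq_mul_scq_inv_eq_vekua hf h0 rfl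
  · exact Dq_mul_scq_inv_eq_vekua hf h0 rfl

/-- F₀,…,F₃ solve the main Vekua equation, and W = Σφⱼ Fⱼ solves
it iff Σ(Dφⱼ)Fⱼ = 0. -/
theorem stmt16 (Ω : Set V3) (hΩ : IsOpen Ω) (f : V3 → ℂ)
    (hf : ContDiffOn ℝ 1 f Ω) (hf0 : ∀ x ∈ Ω, f x ≠ 0) :
    (∀ j : Fin 4, ∀ x ∈ Ω,
      Dq (Ffun f j) x = vecq (fun k => grad f x k / f x) * qconj (Ffun f j x)) ∧
    (∀ φ : Fin 4 → V3 → ℂ, (∀ j, ContDiffOn ℝ 1 (φ j) Ω) →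
      ((∀ x ∈ Ω,
          Dq (fun y => ∑ j : Fin 4, scq (φ j y) * Ffun f j y) x
            = vecq (fun k => grad f x k / f x)
                * qconj (∑ j : Fin 4, scq (φ j x) * Ffun f j x)) ↔
       (∀ x ∈ Ω, ∑ j : Fin 4, vecq (grad (φ j) x) * Ffun f j x = 0))) := by
  have hdiff {g : V3 → ℂ} (hg : ContDiffOn ℝ 1 g Ω) {x : V3} (hx : x ∈ Ω) :
      DifferentiableAt ℝ g x :=
    (hg.contDiffAt (hΩ.mem_nhds hx)).differentiableAt one_ne_zero
  have hvek {x : V3} (hx : x ∈ Ω) (j : Fin 4) :=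
    Dq_Ffun_eq_vekua (hdiff hf hx) (hf0 x hx) j
  refine ⟨fun j x hx => hvek hx j, fun φ hφ => forall₂_congr fun x hx => ?_⟩
  rw [Dq_sum_scq_mul_of_vekua Finset.univ (fun j _ => hdiff (hφ j) hx)
    (fun j _ => qDifferentiableAt_Ffun (hdiff hf hx) (hf0 x hx) j) (fun j _ => hvek hx j),
    add_eq_right]
end
end
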